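/- Let K be a compact zerodimensional space, μ a Radon probability measure on K, f : K → 2^ω continuous. Suppose there exist clopen sets {A_α : α ∈ Λ}, Λ uncountable, a point t ∈ 2^ω, and N ∈ ω such that μ_{t|n}(A_α △ A_β) > 1/4 for all distinct α, β ∈ Λ and all n > N (where μ_σ is the conditional measure on f⁻¹[[σ]], assumed positive). Then any weak* accumulation point μ_t of {μ_{t|n} : n > N} is a non-separable measure concentrated on the fiber f⁻¹({t}). -/

import Mathlib

open MeasureTheory Set Filter

/-! Evaluation at a clopen set is weak*-continuous, its indicator being a bounded continuous
function, so lower bounds on `μ_{t|n}(C)` for clopen `C` pass to the accumulation point `μ_t`.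
Hence the `A_α` stay `1/4`-separated for `μ_t`, which no countable dense family of sets allows,
and each `f⁻¹[[t|m]]`, of full `μ_{t|n}`-measure once `n ≥ m`, has full `μ_t`-measure; these
sets intersect to the fiber `f⁻¹{t}`. -/

/-- The basic clopen cylinder `[t|n]` in Cantor space. -/
def Cyl (t : ℕ → Bool) (n : ℕ) : Set (ℕ → Bool) := {s | ∀ i < n, s i = t i}

/-- A measure is separable if some countable family of measurable sets approximates it
in the symmetric-difference pseudometric. -/
def MeasureSeparable {K : Type*} [MeasurableSpace K] (μ : Measure K) : Prop :=
  ∃ E : Set (Set K), E.Countable ∧ (∀ B ∈ E, MeasurableSet B) ∧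
    ∀ A : Set K, MeasurableSet A → ∀ ε : ENNReal, 0 < ε → ∃ B ∈ E, μ (symmDiff A B) < ε

lemma isClopen_cyl (t : ℕ → Bool) (n : ℕ) : IsClopen (Cyl t n) := by
  have h : Cyl t n = ⋂ i ∈ Finset.range n, (fun s : ℕ → Bool => s i) ⁻¹' {t i} := by
    ext s; simp [Cyl]
  rw [h]
  exact isClopen_biInter_finset fun i _ =>
    (isClopen_discrete {t i}).preimage (continuous_apply i)

lemma cyl_anti (t : ℕ → Bool) : Antitone (Cyl t) :=
  fun _ _ hmn _ hs i hi => hs i (hi.trans_le hmn)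

lemma iInter_cyl (t : ℕ → Bool) : ⋂ n, Cyl t n = {t} := by
  ext s
  simp only [mem_iInter, mem_singleton_iff, Cyl]
  exact ⟨fun h => funext fun i => h (i + 1) i i.lt_succ_self, fun h _ i _ => h ▸ rfl⟩

lemma IsClopen.symmDiff {X : Type*} [TopologicalSpace X] {s t : Set X} (hs : IsClopen s)
    (ht : IsClopen t) : IsClopen (symmDiff s t) :=
  (hs.diff ht).union (ht.diff hs)

lemma prob_iInter_eq_one {α ι : Type*} [MeasurableSpace α] [Countable ι] {μ : Measure α}
    [IsProbabilityMeasure μ] {s : ι → Set α} (hs : ∀ i, MeasurableSet (s i))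
    (h : ∀ i, μ (s i) = 1) : μ (⋂ i, s i) = 1 :=
  (mem_ae_iff_prob_eq_one (MeasurableSet.iInter hs)).1 <|
    countable_iInter_mem.2 fun i => (mem_ae_iff_prob_eq_one (hs i)).2 (h i)

lemma not_measureSeparable_of_pairwise_le_measure_symmDiff {K ι : Type*} [MeasurableSpace K]
    [Uncountable ι] {μ : Measure K} (A : ι → Set K) (hA : ∀ i, MeasurableSet (A i))
    {ε : ENNReal} (hε : 0 < ε) (hsep : Pairwise fun i j => ε ≤ μ (symmDiff (A i) (A j))) :
    ¬ MeasureSeparable μ := by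
  rintro ⟨E, hE, -, happrox⟩
  have : Countable E := hE.to_subtype
  choose B hBE hB using fun i => happrox (A i) (hA i) (ε / 2) (ENNReal.half_pos hε.ne')
  obtain ⟨i, j, hBij, hij⟩ := Function.not_injective_iff.1 <|
    not_injective_uncountable_countable fun i => (⟨B i, hBE i⟩ : E)
  have hBij : B i = B j := congrArg Subtype.val hBij
  refine (hsep hij).not_gt ?_
  calc μ (symmDiff (A i) (A j))
      ≤ μ (symmDiff (A i) (B i)) + μ (symmDiff (B i) (A j)) := measure_symmDiff_le _ _ _
    _ < ε / 2 + ε / 2 :=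
        ENNReal.add_lt_add (hB i) (by rw [symmDiff_comm, hBij]; exact hB j)
    _ = ε := ENNReal.add_halves ε

namespace MeasureTheory.ProbabilityMeasure

variable {K : Type*} [TopologicalSpace K] [MeasurableSpace K] [OpensMeasurableSpace K]

lemma continuous_apply_of_isClopen {C : Set K} (hC : IsClopen C) :
    Continuous fun ν : ProbabilityMeasure K => (ν : Measure K) C := by
  have h (ν : ProbabilityMeasure K) : (ν : Measure K) C =
      ENNReal.ofReal (∫ x, BoundedContinuousFunction.indicator C hC x ∂(ν : Measure K)) := by
    simp only [BoundedContinuousFunction.indicator_apply]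
    rw [integral_indicator_one hC.isOpen.measurableSet, ofReal_measureReal]
  simp_rw [h]
  exact ENNReal.continuous_ofReal.comp (continuous_integral_boundedContinuousFunction _)

lemma le_apply_of_mapClusterPt {ι : Type*} {l : Filter ι} {μs : ι → ProbabilityMeasure K}
    {μ : ProbabilityMeasure K} (hμ : MapClusterPt μ l μs) {C : Set K} (hC : IsClopen C)
    {c : ENNReal} (hc : ∀ᶠ i in l, c ≤ (μs i : Measure K) C) : c ≤ (μ : Measure K) C := by
  have hclosed : IsClosed {ν : ProbabilityMeasure K | c ≤ (ν : Measure K) C} :=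
    isClosed_le continuous_const (continuous_apply_of_isClopen hC)
  exact hclosed.closure_subset (hμ.mem_closure_of_mem _ hc)

end MeasureTheory.ProbabilityMeasure

theorem stmt19_general {K : Type*} [TopologicalSpace K]
    [MeasurableSpace K] [BorelSpace K]
    (μ : Measure K)
    (f : K → (ℕ → Bool)) (hf : Continuous f) (t : ℕ → Bool)
    -- the conditional measures `μ_{t|n}` on `f⁻¹[[t|n]]`:
    (μs : ℕ → ProbabilityMeasure K)
    (hμs : ∀ (n : ℕ) (A : Set K), MeasurableSet A →
      (μs n : Measure K) A = μ (A ∩ f ⁻¹' Cyl t n) / μ (f ⁻¹' Cyl t n))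
    -- an uncountable family of clopen sets `1/4`-separated for all `μ_{t|n}`, `n > N`:
    {Λ : Type*} [Uncountable Λ] (A : Λ → Set K) (hA : ∀ α, IsClopen (A α)) (N : ℕ)
    (hsep : ∀ n > N, ∀ α β : Λ, α ≠ β →
      (1/4 : ENNReal) < (μs n : Measure K) (symmDiff (A α) (A β)))
    -- `μ_t` is a weak* accumulation point of `{μ_{t|n} : n > N}`:
    (μt : ProbabilityMeasure K)
    (hacc : MapClusterPt μt (atTop ⊓ 𝓟 {n | N < n}) μs) :
    ¬ MeasureSeparable (μt : Measure K) ∧ (μt : Measure K) (f ⁻¹' {t}) = 1 := by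
  have hcyl : ∀ n, IsClopen (f ⁻¹' Cyl t n) := fun n => (isClopen_cyl t n).preimage hf
  have hsep_t : Pairwise fun α β => 1/4 ≤ (μt : Measure K) (symmDiff (A α) (A β)) :=
    fun α β hαβ =>
      ProbabilityMeasure.le_apply_of_mapClusterPt hacc ((hA α).symmDiff (hA β)) <|
        eventually_inf_principal.2 <| .of_forall fun n hn => (hsep n hn α β hαβ).le
  have hμs_cyl : ∀ m n, m ≤ n → (μs n : Measure K) (f ⁻¹' Cyl t m) = 1 := by
    intro m n hmn
    have hnull : (μs n : Measure K) (f ⁻¹' Cyl t n)ᶜ = 0 := by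
      rw [hμs n _ (hcyl n).isOpen.measurableSet.compl, compl_inter_self, measure_empty,
        ENNReal.zero_div]
    exact (prob_compl_eq_zero_iff (hcyl m).isOpen.measurableSet).1 <|
      measure_mono_null (compl_subset_compl.2 (preimage_mono (cyl_anti t hmn))) hnull
  refine ⟨not_measureSeparable_of_pairwise_le_measure_symmDiff A
    (fun α => (hA α).isOpen.measurableSet) (by norm_num) hsep_t, ?_⟩
  rw [← iInter_cyl, preimage_iInter]
  refine prob_iInter_eq_one (fun m => (hcyl m).isOpen.measurableSet) fun m =>
    le_antisymm prob_le_one <| ProbabilityMeasure.le_apply_of_mapClusterPt hacc (hcyl m) ?_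
  exact (eventually_ge_atTop m).filter_mono inf_le_left |>.mono fun n hmn => (hμs_cyl m n hmn).ge

theorem stmt19 {K : Type*} [TopologicalSpace K] [CompactSpace K] [T2Space K]
    [TotallyDisconnectedSpace K] [MeasurableSpace K] [BorelSpace K]
    (μ : Measure K) [IsProbabilityMeasure μ] [μ.Regular]
    (f : K → (ℕ → Bool)) (hf : Continuous f) (t : ℕ → Bool)
    -- the cylinders around `t` have positive measure:
    (hpos : ∀ n : ℕ, 0 < μ (f ⁻¹' Cyl t n))
    -- the conditional measures `μ_{t|n}` on `f⁻¹[[t|n]]`: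
    (μs : ℕ → ProbabilityMeasure K)
    (hμs : ∀ (n : ℕ) (A : Set K), MeasurableSet A →
      (μs n : Measure K) A = μ (A ∩ f ⁻¹' Cyl t n) / μ (f ⁻¹' Cyl t n))
    -- an uncountable family of clopen sets `1/4`-separated for all `μ_{t|n}`, `n > N`:
    {Λ : Type*} [Uncountable Λ] (A : Λ → Set K) (hA : ∀ α, IsClopen (A α)) (N : ℕ)
    (hsep : ∀ n > N, ∀ α β : Λ, α ≠ β →
      (1/4 : ENNReal) < (μs n : Measure K) (symmDiff (A α) (A β)))
    -- `μ_t` is a weak* accumulation point of `{μ_{t|n} : n > N}`: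
    (μt : ProbabilityMeasure K)
    (hacc : MapClusterPt μt (atTop ⊓ 𝓟 {n | N < n}) μs) :
    ¬ MeasureSeparable (μt : Measure K) ∧ (μt : Measure K) (f ⁻¹' {t}) = 1 :=
  stmt19_general μ f hf t μs hμs A hA N hsep μt hacc
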